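/- If for every integer s with p ≤ s ≤ t − 1 there exists a subset I ⊆ {1, …, k} with Σ_{i∈I} q_i = s (a NO instance of SUBSET SUM INTERVAL), then the two-player game (X, Ξ, u_L, u_G) has no finitely supported mixed-strategy Nash equilibrium (and in particular no pure-strategy Nash equilibrium). -/
import Mathlib


open Finset

namespace MneHardness

/-- The union of two polyhedra
`S = {(h,y,x) : x ≥ 0, h = x, y = 1} ∪ {(h,y,x) : x ≥ 0, h = 0, y = 0}`. -/
def Sset : Set (ℝ × ℝ × ℝ) :=
  {v | (0 ≤ v.2.2 ∧ v.1 = v.2.2 ∧ v.2.1 = 1) ∨ (0 ≤ v.2.2 ∧ v.1 = 0 ∧ v.2.1 = 0)}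

/-- `Q = Σ_{i=1}^k q_i`. -/
def Qval (k : ℕ) (q : ℕ → ℕ) : ℕ := ∑ i ∈ Finset.Icc 1 k, q i

/-- The Latin strategy set `X ⊆ ℝ^{k+3r+2}`, coordinates `x 0, …, x (k+3r+1)`
(coordinates beyond index `k+3r+1` are pinned to `0`). -/
def Xset (k r p : ℕ) (q : ℕ → ℕ) : Set (ℕ → ℝ) :=
  {x | (∀ i ≤ k, x i = 0 ∨ x i = 1) ∧
       (∀ i, 1 ≤ i → i ≤ r → x (k + 3 * r + 1) = x (k + 2 * r + i)) ∧
       (x (k + 3 * r + 1) = (p : ℝ) + ∑ i ∈ Finset.Icc 1 r, (2 : ℝ) ^ (i - 1) * x (k + r + i)) ∧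
       (x 0 / 2 + (∑ i ∈ Finset.Icc 1 k, (q i : ℝ) * x i) ≤ x (k + 3 * r + 1)) ∧
       (∀ i, 1 ≤ i → i ≤ r → (x (k + i), x (k + r + i), x (k + 2 * r + i)) ∈ Sset) ∧
       (∀ i, k + 3 * r + 1 < i → x i = 0)}

/-- The Greek strategy set `Ξ ⊆ ℝ^{r+2}`, coordinates `ξ 0, …, ξ (r+1)`
(coordinates beyond index `r+1` are pinned to `0`). -/
def Ξset (r p : ℕ) : Set (ℕ → ℝ) :=
  {ξ | (∀ i, 1 ≤ i → i ≤ r → ξ i = 0 ∨ ξ i = 1) ∧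
       (ξ (r + 1) = (p : ℝ) + ∑ i ∈ Finset.Icc 1 r, (2 : ℝ) ^ (i - 1) * ξ i) ∧
       (∀ i, r + 1 < i → ξ i = 0)}

/-- The Latin payoff (maximized by the Latin player). -/
noncomputable def uL (k r p : ℕ) (q : ℕ → ℕ) (x ξ : ℕ → ℝ) : ℝ :=
  x 0 / 2 + (∑ i ∈ Finset.Icc 1 k, (q i : ℝ) * x i)
    + 2 * ((Qval k q : ℝ) + 1) * ξ (r + 1) * x (k + 3 * r + 1)
    - ((Qval k q : ℝ) + 1) *
        ((∑ i ∈ Finset.Icc 1 r, (2 : ℝ) ^ (i - 1) * x (k + i)) + (p : ℝ) * x (k + 3 * r + 1))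

/-- The Greek payoff (maximized by the Greek player). -/
def uG (x ξ : ℕ → ℝ) : ℝ := (1 - x 0) * ξ 0

lemma sum_pow_Icc (r : ℕ) : ∑ i ∈ Finset.Icc 1 r, 2 ^ (i - 1) = 2 ^ r - 1 := by
  induction r with
  | zero => simp
  | succ n ih =>
    rw [Finset.sum_Icc_succ_top (by omega), ih]
    have h1 : 1 ≤ 2 ^ n := Nat.one_le_two_pow
    have h2 : 2 ^ (n + 1) = 2 * 2 ^ n := by ring
    simp only [Nat.add_sub_cancel]
    omega

lemma X_struct (k r p : ℕ) (q : ℕ → ℕ) (x : ℕ → ℝ) (hx : x ∈ Xset k r p q) :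
    ∃ n c : ℕ, (n : ℝ) = x (k + 3 * r + 1) ∧ p ≤ n ∧ n ≤ p + 2 ^ r - 1 ∧
      (c : ℝ) = ∑ i ∈ Finset.Icc 1 k, (q i : ℝ) * x i := by
  obtain ⟨h01, _, hsum, _, hS, _⟩ := hx
  have hbit : ∀ i ∈ Finset.Icc 1 r, x (k + r + i) = 0 ∨ x (k + r + i) = 1 := by
    intro i hi
    simp only [Finset.mem_Icc] at hi
    have hmem := hS i hi.1 hi.2
    simp only [Sset, Set.mem_setOf_eq] at hmem
    rcases hmem with ⟨_, _, h⟩ | ⟨_, _, h⟩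
    · right; exact h
    · left; exact h
  refine ⟨p + ∑ i ∈ Finset.Icc 1 r, 2 ^ (i - 1) * (if x (k + r + i) = 1 then 1 else 0),
    ∑ i ∈ Finset.Icc 1 k, q i * (if x i = 1 then 1 else 0), ?_, ?_, ?_, ?_⟩
  · push_cast
    rw [hsum]
    congr 1
    refine Finset.sum_congr rfl fun i hi => ?_
    rcases hbit i hi with h | h <;> simp [h]
  · exact Nat.le_add_right _ _
  · have hb : (∑ i ∈ Finset.Icc 1 r, 2 ^ (i - 1) * (if x (k + r + i) = 1 then 1 else 0))
        ≤ ∑ i ∈ Finset.Icc 1 r, 2 ^ (i - 1) := by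
      refine Finset.sum_le_sum fun i _ => ?_
      split <;> simp
    rw [sum_pow_Icc] at hb
    have h1 : 1 ≤ 2 ^ r := Nat.one_le_two_pow
    omega
  · push_cast
    refine Finset.sum_congr rfl fun i hi => ?_
    simp only [Finset.mem_Icc] at hi
    rcases h01 i hi.2 with h | h <;> simp [h]

lemma xi_mem (r p : ℕ) (M : ℝ) :
    (fun i => if i = 0 then M else if i = r + 1 then (p : ℝ) else 0) ∈ Ξset r p := by
  refine ⟨fun i h1 h2 => Or.inl ?_, ?_, fun i hi => ?_⟩
  · simp only
    rw [if_neg (by omega), if_neg (by omega)]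
  · have hz : ∑ i ∈ Finset.Icc 1 r,
        (2 : ℝ) ^ (i - 1) * (if i = 0 then M else if i = r + 1 then (p : ℝ) else 0) = 0 := by
      refine Finset.sum_eq_zero fun i hi => ?_
      simp only [Finset.mem_Icc] at hi
      rw [if_neg (by omega), if_neg (by omega), mul_zero]
    have hval : (if r + 1 = 0 then M else if r + 1 = r + 1 then (p : ℝ) else 0) = (p : ℝ) := by
      norm_num
    show (if r + 1 = 0 then M else if r + 1 = r + 1 then (p : ℝ) else 0) = _
    rw [hval, hz]
    ring
  · simp only
    rw [if_neg (by omega), if_neg (by omega)]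

lemma no_mixed (k r p t : ℕ) (q : ℕ → ℕ)
    (hk : 1 ≤ k) (hr : 1 ≤ r) (hp : 0 < p) (htp : t = p + 2 ^ r)
    (hno : ∀ s : ℤ, (p : ℤ) ≤ s → s ≤ (t : ℤ) - 1 →
      ∃ I ⊆ Finset.Icc 1 k, (∑ i ∈ I, (q i : ℤ)) = s) :
    ¬ ∃ (m m' : ℕ) (xs : Fin m → (ℕ → ℝ)) (pr : Fin m → ℝ)
        (ξs : Fin m' → (ℕ → ℝ)) (s : Fin m' → ℝ),
      (∀ j, xs j ∈ Xset k r p q) ∧ (∀ j, 0 ≤ pr j) ∧ (∑ j, pr j = 1) ∧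
      (∀ l, ξs l ∈ Ξset r p) ∧ (∀ l, 0 ≤ s l) ∧ (∑ l, s l = 1) ∧
      (∀ x' ∈ Xset k r p q,
        ∑ l, s l * uL k r p q x' (ξs l) ≤ ∑ j, ∑ l, pr j * s l * uL k r p q (xs j) (ξs l)) ∧
      (∀ ξ' ∈ Ξset r p,
        ∑ j, pr j * uG (xs j) ξ' ≤ ∑ j, ∑ l, pr j * s l * uG (xs j) (ξs l)) := by
  rintro ⟨m, m', xs, pr, ξs, s, hX, hpr, hprs, hΞ, hs, hss, hLat, hGre⟩
  -- Step 1: every strategy in the support of `pr` has first coordinate 1.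
  set C := ∑ j, ∑ l, pr j * s l * uG (xs j) (ξs l) with hC
  set A := ∑ j, pr j * (1 - xs j 0) with hA
  have hterm : ∀ j : Fin m, 0 ≤ pr j * (1 - xs j 0) := by
    intro j
    rcases (hX j).1 0 (Nat.zero_le k) with h | h <;> rw [h] <;> nlinarith [hpr j]
  have hA0 : 0 ≤ A := Finset.sum_nonneg fun j _ => hterm j
  have hAM : ∀ M : ℝ, A * M ≤ C := by
    intro M
    have h := hGre _ (xi_mem r p M)
    have huG : ∀ j, uG (xs j)
        (fun i => if i = 0 then M else if i = r + 1 then (p : ℝ) else 0)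
        = (1 - xs j 0) * M := by
      intro j
      rw [uG]
      norm_num
    have e : ∑ j, pr j * uG (xs j)
        (fun i => if i = 0 then M else if i = r + 1 then (p : ℝ) else 0) = A * M := by
      rw [hA, Finset.sum_mul]
      refine Finset.sum_congr rfl fun j _ => ?_
      rw [huG j]
      ring
    rw [e] at h
    exact h
  have hAz : A = 0 := by
    by_contra hne
    have hApos : 0 < A := lt_of_le_of_ne hA0 (Ne.symm hne)
    have h := hAM ((C + 1) / A)
    rw [mul_div_cancel₀ _ (ne_of_gt hApos)] at h
    linarith
  have hx0 : ∀ j, pr j ≠ 0 → xs j 0 = 1 := by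
    intro j hj
    have hall := (Finset.sum_eq_zero_iff_of_nonneg (fun j _ => hterm j)).mp hAz j
      (Finset.mem_univ j)
    rcases mul_eq_zero.mp hall with h | h
    · exact absurd h hj
    · linarith
  -- Step 2: find a supported strategy whose value is at least the equilibrium value.
  set F : Fin m → ℝ := fun j => ∑ l, s l * uL k r p q (xs j) (ξs l) with hF
  set V := ∑ j, ∑ l, pr j * s l * uL k r p q (xs j) (ξs l) with hV
  have hVF : V = ∑ j, pr j * F j := by
    rw [hV]
    refine Finset.sum_congr rfl fun j _ => ?_
    rw [hF, Finset.mul_sum]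
    exact Finset.sum_congr rfl fun l _ => by ring
  obtain ⟨j₀, hj₀, hVj⟩ : ∃ j, pr j ≠ 0 ∧ V ≤ F j := by
    by_contra hcon
    push_neg at hcon
    obtain ⟨j₁, hj₁⟩ : ∃ j : Fin m, pr j ≠ 0 := by
      by_contra hz; push_neg at hz
      rw [Finset.sum_eq_zero (fun j _ => hz j)] at hprs
      exact one_ne_zero hprs.symm
    have hlt : ∑ j, pr j * F j < ∑ j, pr j * V := by
      refine Finset.sum_lt_sum (fun j _ => ?_) ⟨j₁, Finset.mem_univ _, ?_⟩
      · by_cases h : pr j = 0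
        · simp [h]
        · exact mul_le_mul_of_nonneg_left (hcon j h).le (hpr j)
      · exact mul_lt_mul_of_pos_left (hcon j₁ hj₁) (lt_of_le_of_ne (hpr j₁) (Ne.symm hj₁))
    rw [← hVF, ← Finset.sum_mul, hprs, one_mul] at hlt
    exact lt_irrefl V hlt
  -- Step 3: structure of `xs j₀`, construction of an improving deviation.
  obtain ⟨n, c, hn, hpn, hnt, hc⟩ := X_struct k r p q (xs j₀) (hX j₀)
  obtain ⟨h01, h2, h3, h4, h5, h6⟩ := hX j₀
  obtain ⟨I, hI, hIsum⟩ := hno n (by exact_mod_cast hpn) (by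
    have h1 : 1 ≤ 2 ^ r := Nat.one_le_two_pow
    have h2 : n + 1 ≤ t := by omega
    omega)
  have hInat : ∑ i ∈ I, q i = n := by exact_mod_cast hIsum
  set x' : ℕ → ℝ :=
    fun i => if i = 0 then 0 else if i ≤ k then (if i ∈ I then 1 else 0) else xs j₀ i
    with hx'def
  have hgt : ∀ i, k < i → x' i = xs j₀ i := by
    intro i hi
    rw [hx'def]
    simp only
    rw [if_neg (by omega), if_neg (by omega)]
  have hx'0 : x' 0 = 0 := by rw [hx'def]; simp
  have hx'sum : ∑ i ∈ Finset.Icc 1 k, (q i : ℝ) * x' i = (n : ℝ) := by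
    have e1 : ∀ i ∈ Finset.Icc 1 k, (q i : ℝ) * x' i = if i ∈ I then (q i : ℝ) else 0 := by
      intro i hi
      simp only [Finset.mem_Icc] at hi
      rw [hx'def]
      simp only
      rw [if_neg (by omega), if_pos hi.2]
      split <;> ring
    rw [Finset.sum_congr rfl e1, Finset.sum_ite_mem, Finset.inter_eq_right.mpr hI,
      ← Nat.cast_sum, hInat]
  have hx'mem : x' ∈ Xset k r p q := by
    refine ⟨?_, ?_, ?_, ?_, ?_, ?_⟩
    · intro i hi
      rw [hx'def]
      simp only
      by_cases h0 : i = 0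
      · left; rw [if_pos h0]
      · rw [if_neg h0, if_pos hi]
        split
        · right; rfl
        · left; rfl
    · intro i h1i hir
      rw [hgt _ (by omega), hgt _ (by omega)]
      exact h2 i h1i hir
    · rw [hgt _ (by omega), h3]
      congr 1
      refine Finset.sum_congr rfl fun i hi => ?_
      simp only [Finset.mem_Icc] at hi
      rw [hgt _ (by omega)]
    · rw [hx'0, hx'sum, hgt _ (by omega), ← hn]
      norm_num
    · intro i h1i hir
      rw [hgt _ (by omega), hgt _ (by omega), hgt _ (by omega)]
      exact h5 i h1i hir
    · intro i hi
      rw [hgt _ (by omega)]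
      exact h6 i hi
  have hcxbound : (c : ℝ) + 1 ≤ n := by
    have h4' := h4
    rw [hx0 j₀ hj₀, ← hc, ← hn] at h4'
    have hlt : c < n := by
      have : (c : ℝ) < (n : ℝ) := by linarith
      exact_mod_cast this
    exact_mod_cast hlt
  have hcomp : ∀ ξ : ℕ → ℝ, uL k r p q (xs j₀) ξ + 1 / 2 ≤ uL k r p q x' ξ := by
    intro ξ
    simp only [uL]
    have e2 : ∑ i ∈ Finset.Icc 1 r, (2 : ℝ) ^ (i - 1) * x' (k + i)
        = ∑ i ∈ Finset.Icc 1 r, (2 : ℝ) ^ (i - 1) * xs j₀ (k + i) := by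
      refine Finset.sum_congr rfl fun i hi => ?_
      simp only [Finset.mem_Icc] at hi
      rw [hgt _ (by omega)]
    rw [hgt (k + 3 * r + 1) (by omega), hx'0, hx'sum, e2, hx0 j₀ hj₀, ← hc]
    linarith
  have hdev := hLat x' hx'mem
  have hgain : F j₀ + 1 / 2 ≤ ∑ l, s l * uL k r p q x' (ξs l) := by
    rw [hF]
    have hterm2 : ∀ l, s l * uL k r p q (xs j₀) (ξs l) + s l * (1 / 2)
        ≤ s l * uL k r p q x' (ξs l) := by
      intro l
      have h := hcomp (ξs l)
      nlinarith [hs l]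
    calc (∑ l, s l * uL k r p q (xs j₀) (ξs l)) + 1 / 2
        = ∑ l, (s l * uL k r p q (xs j₀) (ξs l) + s l * (1 / 2)) := by
          rw [Finset.sum_add_distrib, ← Finset.sum_mul, hss]; ring
      _ ≤ ∑ l, s l * uL k r p q x' (ξs l) := Finset.sum_le_sum fun l _ => hterm2 l
  linarith

/-- A NO instance of SUBSET SUM INTERVAL yields a game
`(X, Ξ, u_L, u_G)` with no finitely supported mixed-strategy Nash equilibrium
(and in particular no pure-strategy Nash equilibrium). -/
theorem no_instance_has_no_mne
    (k r p t : ℕ) (q : ℕ → ℕ)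
    (hk : 1 ≤ k) (hr : 1 ≤ r) (hq : ∀ i, 1 ≤ i → i ≤ k → 0 < q i)
    (hp : 0 < p) (hpt : p < t) (htp : t = p + 2 ^ r)
    (hno : ∀ s : ℤ, (p : ℤ) ≤ s → s ≤ (t : ℤ) - 1 →
      ∃ I ⊆ Finset.Icc 1 k, (∑ i ∈ I, (q i : ℤ)) = s) :
    (¬ ∃ (m m' : ℕ) (xs : Fin m → (ℕ → ℝ)) (pr : Fin m → ℝ)
        (ξs : Fin m' → (ℕ → ℝ)) (s : Fin m' → ℝ),
      (∀ j, xs j ∈ Xset k r p q) ∧ (∀ j, 0 ≤ pr j) ∧ (∑ j, pr j = 1) ∧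
      (∀ l, ξs l ∈ Ξset r p) ∧ (∀ l, 0 ≤ s l) ∧ (∑ l, s l = 1) ∧
      (∀ x' ∈ Xset k r p q,
        ∑ l, s l * uL k r p q x' (ξs l) ≤ ∑ j, ∑ l, pr j * s l * uL k r p q (xs j) (ξs l)) ∧
      (∀ ξ' ∈ Ξset r p,
        ∑ j, pr j * uG (xs j) ξ' ≤ ∑ j, ∑ l, pr j * s l * uG (xs j) (ξs l))) ∧
    (¬ ∃ x ∈ Xset k r p q, ∃ ξ ∈ Ξset r p,
      (∀ x' ∈ Xset k r p q, uL k r p q x' ξ ≤ uL k r p q x ξ) ∧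
      (∀ ξ' ∈ Ξset r p, uG x ξ' ≤ uG x ξ)) := by
  have key := no_mixed k r p t q hk hr hp htp hno
  refine ⟨key, ?_⟩
  rintro ⟨x, hx, ξ, hξ, hL, hG⟩
  exact key ⟨1, 1, fun _ => x, fun _ => 1, fun _ => ξ, fun _ => 1,
    fun _ => hx, fun _ => zero_le_one, by simp, fun _ => hξ, fun _ => zero_le_one, by simp,
    fun x' hx' => by simpa using hL x' hx',
    fun ξ' hξ' => by simpa using hG ξ' hξ'⟩

end MneHardness
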